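/- Let σ be a rank-one orthogonal projection and ρ a density operator on a finite-dimensional complex Hilbert space with ε = 1 − Tr(ρσ). If ρ commutes with σ, then Tr(ρ²) ≤ 1 − 2ε + 2ε², i.e. Tr(ρ²) ≤ (1−ε)² + ε². -/

import Mathlib

open scoped ComplexOrder

/-!
Since `ρ` commutes with `σ`, it splits as `ρσ + ρ(1 - σ)` into two positive semidefinite blocks
whose product vanishes, of traces `1 - ε` and `ε`; hence `Tr(ρ²) = Tr((ρσ)²) + Tr((ρ(1 - σ))²)`.
For a positive semidefinite `A` with eigenvalues `λᵢ ≥ 0`, `Tr(A²) = ∑ λᵢ² ≤ (∑ λᵢ)² = (Tr A)²`.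
-/

lemma IsIdempotentElem.mul_mul_mul_self_of_commute {R : Type*} [Semiring R] {a p : R}
    (hp : IsIdempotentElem p) (hc : Commute a p) : a * p * (a * p) = a * a * p := by
  rw [hc.symm.mul_mul_mul_comm, hp.eq]

lemma Commute.mul_self_eq_add_of_isIdempotentElem {R : Type*} [Ring R] {a p : R}
    (hp : IsIdempotentElem p) (hc : Commute a p) :
    a * a = a * p * (a * p) + a * (1 - p) * (a * (1 - p)) := by
  rw [hp.mul_mul_mul_self_of_commute hc,
    hp.one_sub.mul_mul_mul_self_of_commute ((Commute.one_right a).sub_right hc),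
    ← mul_add, add_sub_cancel, mul_one]

namespace Matrix

variable {n 𝕜 : Type*} [Fintype n] [RCLike 𝕜]

lemma IsHermitian.trace_mul_self [DecidableEq n] {A : Matrix n n 𝕜} (hA : A.IsHermitian) :
    (A * A).trace = ∑ i, ((hA.eigenvalues i ^ 2 : ℝ) : 𝕜) := by
  conv_lhs => rw [hA.spectral_theorem, ← map_mul, Unitary.conjStarAlgAut_apply, trace_mul_cycle,
    Unitary.coe_star_mul_self, one_mul, diagonal_mul_diagonal, trace_diagonal]
  simp [sq]

lemma PosSemidef.re_trace_mul_self_le_sq {A : Matrix n n 𝕜} (hA : A.PosSemidef) :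
    RCLike.re (A * A).trace ≤ RCLike.re A.trace ^ 2 := by
  classical
  rw [hA.isHermitian.trace_mul_self, hA.isHermitian.trace_eq_sum_eigenvalues]
  simp only [map_sum, RCLike.ofReal_re]
  exact Finset.sum_sq_le_sq_sum_of_nonneg fun i _ ↦ hA.eigenvalues_nonneg i

lemma PosSemidef.mul_of_commute_isStarProjection {A P : Matrix n n 𝕜} (hA : A.PosSemidef)
    (hP : IsStarProjection P) (hc : Commute A P) : (A * P).PosSemidef := by
  have hcompress : Pᴴ * A * P = A * P := by
    rw [hP.isSelfAdjoint.isHermitian.eq, ← hc.eq, mul_assoc, hP.isIdempotentElem.eq]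
  exact hcompress ▸ hA.conjTranspose_mul_mul_same P

lemma PosSemidef.re_trace_mul_self_le_of_commute_isStarProjection [DecidableEq n]
    {A P : Matrix n n 𝕜} (hA : A.PosSemidef) (hP : IsStarProjection P) (hc : Commute A P) :
    RCLike.re (A * A).trace ≤
      RCLike.re (A * P).trace ^ 2 + (RCLike.re A.trace - RCLike.re (A * P).trace) ^ 2 := by
  have hAP := (hA.mul_of_commute_isStarProjection hP hc).re_trace_mul_self_le_sq
  have hAQ := (hA.mul_of_commute_isStarProjection hP.one_sub
    ((Commute.one_right A).sub_right hc)).re_trace_mul_self_le_sq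
  rw [mul_sub, mul_one, trace_sub, map_sub] at hAQ
  rw [hc.mul_self_eq_add_of_isIdempotentElem hP.isIdempotentElem, trace_add, map_add,
    mul_sub, mul_one]
  linarith

end Matrix

theorem stmt8_general {d : ℕ} (σ ρ : Matrix (Fin d) (Fin d) ℂ)
    (hσH : σ.IsHermitian) (hσ2 : σ * σ = σ)
    (hρ : ρ.PosSemidef) (hρtr : ρ.trace = 1)
    (hcomm : ρ * σ = σ * ρ)
    (ε : ℝ) (hε : ε = 1 - ((ρ * σ).trace.re)) :
    (ρ * ρ).trace.re ≤ 1 - 2 * ε + 2 * ε ^ 2 := by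
  have hbound := hρ.re_trace_mul_self_le_of_commute_isStarProjection
    ⟨hσ2, hσH.isSelfAdjoint⟩ hcomm
  simp only [RCLike.re_to_complex, hρtr, Complex.one_re] at hbound
  rw [hε]
  linarith

/-- For a rank-one orthogonal projection `σ` and a density operator `ρ`
with `ε = 1 − Tr(ρσ)`, if `ρ` commutes with `σ`, then `Tr(ρ²) ≤ 1 − 2ε + 2ε²`. -/
theorem stmt8 {d : ℕ} (σ ρ : Matrix (Fin d) (Fin d) ℂ)
    (hσH : σ.IsHermitian) (hσ2 : σ * σ = σ) (hσtr : σ.trace = 1)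
    (hρ : ρ.PosSemidef) (hρtr : ρ.trace = 1)
    (hcomm : ρ * σ = σ * ρ)
    (ε : ℝ) (hε : ε = 1 - ((ρ * σ).trace.re)) :
    (ρ * ρ).trace.re ≤ 1 - 2 * ε + 2 * ε ^ 2 :=
  stmt8_general σ ρ hσH hσ2 hρ hρtr hcomm ε hε
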